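/- For α ≥ 1/2, never abstaining is optimal: for every p ∈ [0,1]^n, inf_{g ∈ [-1,1]^n} sup_{z ∈ Z} L(0,g,z) ≤ inf_{g ∈ [-1,1]^n} sup_{z ∈ Z} L(p,g,z); hence p = 0 attains the abstain-game value V_abst. -/
import Mathlib


open Finset

/-- Expected loss of the abstain game with abstention cost `α`,
abstain probabilities `p`, prediction `g`, and labels `z`. -/
noncomputable def Labst (n : ℕ) (α : ℝ) (p g z : ℕ → ℝ) : ℝ :=
  (1 / (n : ℝ)) * ∑ i ∈ Icc 1 n,
    (p i * α + (1 / 2) * (1 - p i) * (1 - g i * z i))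

/-- Inner value: best worst-case loss over predictions `g` for fixed abstain
probabilities `p`. -/
noncomputable def innerVal (n : ℕ) (a : ℕ → ℝ) (lam α : ℝ) (p : ℕ → ℝ) : ℝ :=
  sInf {x : ℝ | ∃ g : ℕ → ℝ, (∀ i ∈ Icc 1 n, |g i| ≤ 1) ∧
    x = sSup {y : ℝ | ∃ z : ℕ → ℝ, (∀ i ∈ Icc 1 n, |z i| ≤ 1) ∧
      lam ≤ (1 / (n : ℝ)) * ∑ i ∈ Icc 1 n, z i * a i ∧
      y = Labst n α p g z}}

/-- The value of the abstain game. -/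
noncomputable def Vabst (n : ℕ) (a : ℕ → ℝ) (lam α : ℝ) : ℝ :=
  sInf {x : ℝ | ∃ p : ℕ → ℝ, (∀ i ∈ Icc 1 n, 0 ≤ p i ∧ p i ≤ 1) ∧
    x = innerVal n a lam α p}

/-- for α ≥ 1/2, never abstaining is optimal. -/
theorem never_abstain_optimal_for_large_alpha
    (n : ℕ) (hn : 1 ≤ n) (a : ℕ → ℝ)
    (hord : ∀ i j : ℕ, 1 ≤ i → i ≤ j → j ≤ n → |a j| ≤ |a i|)
    (lam : ℝ) (hlam_pos : 0 < lam)
    (hlam_le : lam ≤ (1 / (n : ℝ)) * ∑ i ∈ Icc 1 n, |a i|)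
    (α : ℝ) (hα : 1 / 2 ≤ α) :
    (∀ p : ℕ → ℝ, (∀ i ∈ Icc 1 n, 0 ≤ p i ∧ p i ≤ 1) →
        innerVal n a lam α (fun _ => 0) ≤ innerVal n a lam α p) ∧
    innerVal n a lam α (fun _ => 0) = Vabst n a lam α := by
  have hn0 : (0:ℝ) < n := by exact_mod_cast Nat.lt_of_lt_of_le Nat.zero_lt_one hn
  have hninv : (0:ℝ) ≤ 1 / n := by positivity
  -- the witness label vector
  set z0 : ℕ → ℝ := fun i => if a i < 0 then -1 else 1 with hz0def
  have hz0abs : ∀ i ∈ Icc 1 n, |z0 i| ≤ 1 := by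
    intro i _
    simp only [hz0def]
    split <;> simp
  have hz0mul : ∀ i, z0 i * a i = |a i| := by
    intro i
    simp only [hz0def]
    split
    · rename_i h; rw [abs_of_neg h]; ring
    · rename_i h; rw [abs_of_nonneg (not_lt.mp h)]; ring
  have hz0sum : lam ≤ (1/(n:ℝ)) * ∑ i ∈ Icc 1 n, z0 i * a i := by
    refine le_trans hlam_le (le_of_eq ?_)
    congr 1
    exact Finset.sum_congr rfl (fun i _ => (hz0mul i).symm)
  -- upper bound on Labst
  have hL_le : ∀ (p g z : ℕ → ℝ), (∀ i ∈ Icc 1 n, 0 ≤ p i ∧ p i ≤ 1) →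
      (∀ i ∈ Icc 1 n, |g i| ≤ 1) → (∀ i ∈ Icc 1 n, |z i| ≤ 1) →
      Labst n α p g z ≤ α + 1 := by
    intro p g z hp hg hz
    unfold Labst
    have hsum : ∑ i ∈ Icc 1 n, (p i * α + (1 / 2) * (1 - p i) * (1 - g i * z i))
        ≤ ∑ _i ∈ Icc 1 n, (α + 1) := by
      apply Finset.sum_le_sum
      intro i hi
      obtain ⟨hp0, hp1⟩ := hp i hi
      have hgz : |g i * z i| ≤ 1 := by
        rw [abs_mul]
        exact mul_le_one₀ (hg i hi) (abs_nonneg _) (hz i hi)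
      have h1 : g i * z i ≤ 1 := le_trans (le_abs_self _) hgz
      have h2 : -1 ≤ g i * z i := neg_le_of_abs_le hgz
      nlinarith
    have hcard : ∑ _i ∈ Icc 1 n, (α + 1 : ℝ) = n * (α + 1) := by
      rw [Finset.sum_const, Nat.card_Icc]
      simp [nsmul_eq_mul]; ring
    calc (1 / (n:ℝ)) * ∑ i ∈ Icc 1 n, (p i * α + (1 / 2) * (1 - p i) * (1 - g i * z i))
        ≤ (1 / (n:ℝ)) * (n * (α + 1)) := by
          rw [← hcard]; exact mul_le_mul_of_nonneg_left hsum hninv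
      _ = α + 1 := by field_simp
  -- lower bound when p = 0
  have hL0_nonneg : ∀ (g z : ℕ → ℝ), (∀ i ∈ Icc 1 n, |g i| ≤ 1) →
      (∀ i ∈ Icc 1 n, |z i| ≤ 1) → 0 ≤ Labst n α (fun _ => 0) g z := by
    intro g z hg hz
    unfold Labst
    apply mul_nonneg hninv
    apply Finset.sum_nonneg
    intro i hi
    have hgz : |g i * z i| ≤ 1 := by
      rw [abs_mul]
      exact mul_le_one₀ (hg i hi) (abs_nonneg _) (hz i hi)
    have h1 : g i * z i ≤ 1 := le_trans (le_abs_self _) hgz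
    nlinarith
  -- comparison lemma
  have hcmp : ∀ (p g z : ℕ → ℝ), (∀ i ∈ Icc 1 n, 0 ≤ p i ∧ p i ≤ 1) →
      Labst n α (fun _ => 0) (fun i => (1 - p i) * g i) z ≤ Labst n α p g z := by
    intro p g z hp
    unfold Labst
    apply mul_le_mul_of_nonneg_left _ hninv
    apply Finset.sum_le_sum
    intro i hi
    obtain ⟨hp0, _⟩ := hp i hi
    have : 0 ≤ p i * (α - 1/2) := mul_nonneg hp0 (by linarith)
    nlinarith
  -- the set Y is nonempty
  have hYne : ∀ (p g : ℕ → ℝ),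
      (Labst n α p g z0) ∈ {y : ℝ | ∃ z : ℕ → ℝ, (∀ i ∈ Icc 1 n, |z i| ≤ 1) ∧
        lam ≤ (1 / (n : ℝ)) * ∑ i ∈ Icc 1 n, z i * a i ∧ y = Labst n α p g z} :=
    fun p g => ⟨z0, hz0abs, hz0sum, rfl⟩
  -- Y bounded above
  have hYbdd : ∀ (p g : ℕ → ℝ), (∀ i ∈ Icc 1 n, 0 ≤ p i ∧ p i ≤ 1) →
      (∀ i ∈ Icc 1 n, |g i| ≤ 1) →
      BddAbove {y : ℝ | ∃ z : ℕ → ℝ, (∀ i ∈ Icc 1 n, |z i| ≤ 1) ∧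
        lam ≤ (1 / (n : ℝ)) * ∑ i ∈ Icc 1 n, z i * a i ∧ y = Labst n α p g z} := by
    intro p g hp hg
    refine ⟨α + 1, ?_⟩
    rintro y ⟨z, hz, _, rfl⟩
    exact hL_le p g z hp hg hz
  have h0adm : ∀ i ∈ Icc 1 n, (0:ℝ) ≤ (fun _ => (0:ℝ)) i ∧ (fun _ => (0:ℝ)) i ≤ 1 := by
    intro i _; exact ⟨le_refl 0, zero_le_one⟩
  -- the outer set for p = 0 is bounded below by 0
  have hS0bdd : ∀ x ∈ {x : ℝ | ∃ g : ℕ → ℝ, (∀ i ∈ Icc 1 n, |g i| ≤ 1) ∧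
      x = sSup {y : ℝ | ∃ z : ℕ → ℝ, (∀ i ∈ Icc 1 n, |z i| ≤ 1) ∧
        lam ≤ (1 / (n : ℝ)) * ∑ i ∈ Icc 1 n, z i * a i ∧
        y = Labst n α (fun _ => 0) g z}}, (0:ℝ) ≤ x := by
    rintro x ⟨g, hg, rfl⟩
    calc (0:ℝ) ≤ Labst n α (fun _ => 0) g z0 := hL0_nonneg g z0 hg hz0abs
      _ ≤ _ := le_csSup (hYbdd _ g h0adm hg) (hYne _ g)
  -- main monotonicity claim
  have key : ∀ p : ℕ → ℝ, (∀ i ∈ Icc 1 n, 0 ≤ p i ∧ p i ≤ 1) →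
      innerVal n a lam α (fun _ => 0) ≤ innerVal n a lam α p := by
    intro p hp
    unfold innerVal
    apply le_csInf
    · exact ⟨_, fun _ => 0, fun i _ => by simp, rfl⟩
    · rintro x ⟨g, hg, rfl⟩
      set g' : ℕ → ℝ := fun i => (1 - p i) * g i with hg'def
      have hg' : ∀ i ∈ Icc 1 n, |g' i| ≤ 1 := by
        intro i hi
        obtain ⟨hp0, hp1⟩ := hp i hi
        simp only [hg'def]
        rw [abs_mul]
        have h1 : |1 - p i| ≤ 1 := by rw [abs_le]; constructor <;> linarith
        exact mul_le_one₀ h1 (abs_nonneg _) (hg i hi)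
      have hmem : sSup {y : ℝ | ∃ z : ℕ → ℝ, (∀ i ∈ Icc 1 n, |z i| ≤ 1) ∧
          lam ≤ (1 / (n : ℝ)) * ∑ i ∈ Icc 1 n, z i * a i ∧
          y = Labst n α (fun _ => 0) g' z} ∈ {x : ℝ | ∃ g : ℕ → ℝ,
            (∀ i ∈ Icc 1 n, |g i| ≤ 1) ∧
            x = sSup {y : ℝ | ∃ z : ℕ → ℝ, (∀ i ∈ Icc 1 n, |z i| ≤ 1) ∧
              lam ≤ (1 / (n : ℝ)) * ∑ i ∈ Icc 1 n, z i * a i ∧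
              y = Labst n α (fun _ => 0) g z}} := ⟨g', hg', rfl⟩
      refine le_trans (csInf_le ⟨0, hS0bdd⟩ hmem) ?_
      apply csSup_le ⟨_, hYne _ g'⟩
      rintro y ⟨z, hz, hzsum, rfl⟩
      exact le_trans (hcmp p g z hp) (le_csSup (hYbdd p g hp hg) ⟨z, hz, hzsum, rfl⟩)
  refine ⟨key, ?_⟩
  unfold Vabst
  have hmemT : innerVal n a lam α (fun _ => 0) ∈ {x : ℝ | ∃ p : ℕ → ℝ,
      (∀ i ∈ Icc 1 n, 0 ≤ p i ∧ p i ≤ 1) ∧ x = innerVal n a lam α p} :=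
    ⟨fun _ => 0, h0adm, rfl⟩
  apply le_antisymm
  · apply le_csInf ⟨_, hmemT⟩
    rintro x ⟨p, hp, rfl⟩
    exact key p hp
  · refine csInf_le ⟨innerVal n a lam α (fun _ => 0), ?_⟩ hmemT
    rintro x ⟨p, hp, rfl⟩
    exact key p hp
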